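/- arXiv:1201.4670 — 5 statements merged into one kernel-verified Lean document; each statement's English description precedes it below -/
import Mathlib

section
/- Assume the family (r_j)_{j∈ℤ³} is independent, each with law ν, and that for some η > 0 and some 1 ≤ p < 3 one has Σ_{j ∈ ℤ³, j ≠ 0} ‖ν‖_{L^∞(W + B_η − j)}^{1/p} < ∞. Then E(X₁^p) < ∞, i.e. X₁ ∈ L^p(Ω). -/
open MeasureTheory ProbabilityTheory ENNReal Pointwise

noncomputable section

/-- `ℝ³` with the Euclidean norm. -/
abbrev E3 := EuclideanSpace ℝ (Fin 3)

/-- The lattice point `j ∈ ℤ³` viewed in `ℝ³`. -/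
def latt (j : Fin 3 → ℤ) : E3 := (EuclideanSpace.equiv (Fin 3) ℝ).symm (fun i => (j i : ℝ))

/-- The semi-open unit cube `W = [-1/2, 1/2)³`. -/
def Wcube : Set E3 := {x | ∀ i, -(1:ℝ)/2 ≤ x i ∧ x i < 1/2}

/-- The distance (in `[0,∞]`) from the perturbed lattice point `j + r_j(ω)` to its nearest
neighbor: `δ_j(ω) = inf_{k ≠ j} |j + r_j(ω) − k − r_k(ω)|`. -/
def nnd {Ω : Type*} (r : (Fin 3 → ℤ) → Ω → E3) (j : Fin 3 → ℤ) (ω : Ω) : ℝ≥0∞ :=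
  ⨅ k : {k : Fin 3 → ℤ // k ≠ j},
    edist (latt j + r j ω) (latt (k : Fin 3 → ℤ) + r (k : Fin 3 → ℤ) ω)

/-- `X₁(ω) = Σ_{j : j + r_j(ω) ∈ W} 1/δ_j(ω)` with values in `[0,∞]`. -/
def X1 {Ω : Type*} (r : (Fin 3 → ℤ) → Ω → E3) (ω : Ω) : ℝ≥0∞ :=
  ∑' j : Fin 3 → ℤ, Wcube.indicator (fun _ => (nnd r j ω)⁻¹) (latt j + r j ω)

/-- `‖ν‖_{L^∞(A)}`: the least `M ∈ [0,∞]` such that `ν(B) ≤ M·λ(B)` for every Borel `B ⊆ A`. -/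
def densBound (ν : Measure E3) (A : Set E3) : ℝ≥0∞ :=
  sInf {M : ℝ≥0∞ | ∀ B : Set E3, B ⊆ A → MeasurableSet B → ν B ≤ M * volume B}

/-!
Pointwise, `δ_j^{-p} ≤ η^{-p} + Σ_{k ≠ j} K(j + r_j - k - r_k)` with the truncated kernel
`K(y) = |y|^{-p} 1_{|y| < η}`, whose Lebesgue integral is finite because `p < 3`. By independence
the `(j, k)` term is an integral against `ν ⊗ ν`. Integrating first in `r_k`, which the kernel
confines to `W + B_η - k`, bounds it by `ν(W - j) · ‖ν‖_{L^∞(W + B_η - k)} · ∫ K`; for `k = 0` one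
integrates in `r_j` instead, which lies in `W - j ⊆ W + B_η - j`. With `m_j = ‖ν‖_{L^∞(W + B_η - j)}`
for `j ≠ 0` this gives `E[1_{j + r_j ∈ W} δ_j^{-p}] ≤ m_j B + D 1_{j = 0}`, and Minkowski's inequality
for the series `X₁ = Σ_j 1_{j + r_j ∈ W} δ_j^{-1}` reduces `E(X₁^p) < ∞` to `Σ_j m_j^{1/p} < ∞`.
-/

open Metric

namespace ENNReal

theorem iSup_rpow {ι : Sort*} (f : ι → ℝ≥0∞) {p : ℝ} (hp : 0 < p) :
    (⨆ i, f i) ^ p = ⨆ i, f i ^ p :=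
  (orderIsoRpow p hp).map_iSup f

theorem rpow_tsum_le_tsum_rpow {ι : Type*} (a : ι → ℝ≥0∞) {q : ℝ} (hq0 : 0 < q) (hq1 : q ≤ 1) :
    (∑' i, a i) ^ q ≤ ∑' i, a i ^ q := by
  rw [ENNReal.tsum_eq_iSup_sum, iSup_rpow _ hq0]
  refine iSup_le fun s => ?_
  calc (∑ i ∈ s, a i) ^ q ≤ ∑ i ∈ s, a i ^ q :=
        Finset.le_sum_of_subadditive (· ^ q) (by simp [hq0])
          (fun x y => rpow_add_le_add_rpow x y hq0.le hq1) s a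
    _ ≤ ∑' i, a i ^ q := ENNReal.sum_le_tsum s

theorem tsum_rpow_lt_top_of_le {ι : Type*} [DecidableEq ι] {T m : ι → ℝ≥0∞} {q : ℝ}
    (hq0 : 0 < q) (hq1 : q ≤ 1) (hm : ∑' i, m i ^ q < ∞) {B D : ℝ≥0∞} (hB : B ≠ ∞)
    (hD : D ≠ ∞) (i₀ : ι) (hT : ∀ i, T i ≤ m i * B + if i = i₀ then D else 0) :
    ∑' i, T i ^ q < ∞ :=
  calc ∑' i, T i ^ q ≤ ∑' i, ((m i * B) ^ q + (if i = i₀ then D else 0) ^ q) :=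
        ENNReal.tsum_le_tsum fun i =>
          (rpow_le_rpow (hT i) hq0.le).trans (rpow_add_le_add_rpow _ _ hq0.le hq1)
    _ = (∑' i, m i ^ q) * B ^ q + D ^ q := by
        simp_rw [mul_rpow_of_nonneg _ _ hq0.le, apply_ite (· ^ q), zero_rpow_of_pos hq0]
        rw [ENNReal.tsum_add, ENNReal.tsum_mul_right, tsum_ite_eq]
    _ < ∞ := by finiteness

end ENNReal

theorem MeasureTheory.lintegral_tsum_rpow_le {α ι : Type*} [MeasurableSpace α] {μ : Measure α}
    [Countable ι] {f : ι → α → ℝ≥0∞} (hf : ∀ i, AEMeasurable (f i) μ) {p : ℝ} (hp : 1 ≤ p) :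
    ∫⁻ a, (∑' i, f i a) ^ p ∂μ ≤ (∑' i, (∫⁻ a, f i a ^ p ∂μ) ^ (1 / p)) ^ p := by
  have hp0 : 0 < p := zero_lt_one.trans_le hp
  have finite_sum (s : Finset ι) :
      ∫⁻ a, (∑ i ∈ s, f i a) ^ p ∂μ ≤ (∑ i ∈ s, (∫⁻ a, f i a ^ p ∂μ) ^ (1 / p)) ^ p := by
    have h := eLpNorm'_sum_le (q := p) (s := s) (fun i _ => (hf i).aestronglyMeasurable) hp
    simp only [eLpNorm'_eq_lintegral_enorm, enorm_eq_self, Finset.sum_apply] at h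
    rwa [← ENNReal.rpow_le_rpow_iff (one_div_pos.2 hp0), ← ENNReal.rpow_mul,
      mul_one_div_cancel hp0.ne', ENNReal.rpow_one]
  simp_rw [ENNReal.tsum_eq_iSup_sum (f := fun i => f i _), ENNReal.iSup_rpow _ hp0]
  rw [lintegral_iSup_directed fun s =>
    (Finset.aemeasurable_fun_sum s fun i _ => hf i).pow_const p]
  · exact iSup_le fun s =>
      (finite_sum s).trans <| ENNReal.rpow_le_rpow (ENNReal.sum_le_tsum s) hp0.le
  · classical
    exact Monotone.directed_le fun s t hst a =>
      ENNReal.rpow_le_rpow (Finset.sum_le_sum_of_subset hst) hp0.le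

theorem ProbabilityTheory.IndepFun.lintegral_comp_eq_lintegral_prod {Ω α β : Type*}
    [MeasurableSpace Ω] [MeasurableSpace α] [MeasurableSpace β] {P : Measure Ω}
    [IsFiniteMeasure P] {X : Ω → α} {Y : Ω → β} (hXY : IndepFun X Y P) (hX : Measurable X)
    (hY : Measurable Y) {g : α × β → ℝ≥0∞} (hg : Measurable g) :
    ∫⁻ ω, g (X ω, Y ω) ∂P = ∫⁻ z, g z ∂((P.map X).prod (P.map Y)) := by
  rw [← (indepFun_iff_map_prod_eq_prod_map_map hX.aemeasurable hY.aemeasurable).1 hXY,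
    lintegral_map hg (hX.prodMk hY)]

section TruncatedKernel

variable {E : Type*} [NormedAddCommGroup E]

def truncInvPow (η p : ℝ) : E → ℝ≥0∞ := (ball (0 : E) η).indicator fun x => ‖x‖ₑ⁻¹ ^ p

theorem measurable_truncInvPow [MeasurableSpace E] [OpensMeasurableSpace E] (η p : ℝ) :
    Measurable (truncInvPow η p : E → ℝ≥0∞) :=
  (measurable_enorm.inv.pow_const p).indicator measurableSet_ball

theorem mem_add_ball_of_truncInvPow_ne_zero {s : Set E} {a b : E} {η p : ℝ} (ha : a ∈ s)
    (h : truncInvPow η p (a - b) ≠ 0) : b ∈ s + ball 0 η :=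
  ⟨a, ha, b - a, by simpa [← norm_neg (b - a)] using Set.mem_of_indicator_ne_zero h,
    add_sub_cancel a b⟩

theorem lintegral_truncInvPow_lt_top [NormedSpace ℝ E] [FiniteDimensional ℝ E] [Nontrivial E]
    [MeasurableSpace E] [BorelSpace E] (μ : Measure E) [μ.IsAddHaarMeasure] (η : ℝ) {p : ℝ}
    (hp : p < Module.finrank ℝ E) : ∫⁻ x, truncInvPow η p x ∂μ < ∞ := by
  have hint : IntegrableOn (fun x : E => ‖x‖ ^ (-p)) (ball 0 η) μ :=
    integrableOn_ball_of_norm_le_rpow (C := 1) Module.finrank_pos hp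
      (.of_forall fun x => by simp [Real.norm_of_nonneg (Real.rpow_nonneg (norm_nonneg x) _)])
      (measurable_norm.pow_const _).aestronglyMeasurable
  have hae : ∀ᵐ x ∂μ, x ≠ 0 := by simp [ae_iff, measure_singleton]
  calc ∫⁻ x, truncInvPow η p x ∂μ = ∫⁻ x in ball 0 η, ‖‖x‖ ^ (-p)‖ₑ ∂μ := by
        rw [truncInvPow, lintegral_indicator measurableSet_ball]
        refine lintegral_congr_ae ((ae_restrict_of_ae hae).mono fun x hx => ?_)
        have hx : 0 < ‖x‖ := norm_pos_iff.2 hx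
        dsimp only
        rw [Real.enorm_of_nonneg (Real.rpow_nonneg hx.le _), Real.rpow_neg hx.le,
          ofReal_inv_of_pos (Real.rpow_pos_of_pos hx p), ← ofReal_rpow_of_pos hx, ofReal_norm,
          ENNReal.inv_rpow]
    _ < ∞ := hint.2

theorem inv_iInf_edist_rpow_le {κ : Type*} (a : E) (b : κ → E) (η : ℝ) {p : ℝ} (hp : 0 < p) :
    (⨅ k, edist a (b k))⁻¹ ^ p ≤ (ENNReal.ofReal η)⁻¹ ^ p + ∑' k, truncInvPow η p (a - b k) := by
  rw [ENNReal.inv_iInf, ENNReal.iSup_rpow _ hp]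
  refine iSup_le fun k => ?_
  by_cases hk : a - b k ∈ ball 0 η
  · calc (edist a (b k))⁻¹ ^ p = truncInvPow η p (a - b k) := by
          rw [truncInvPow, Set.indicator_of_mem hk, edist_eq_enorm_sub]
      _ ≤ _ := (ENNReal.le_tsum k).trans le_add_self
  · have : ENNReal.ofReal η ≤ edist a (b k) := by
      rw [edist_dist, dist_eq_norm]
      exact ENNReal.ofReal_le_ofReal (by simpa using hk)
    exact (ENNReal.rpow_le_rpow (ENNReal.inv_le_inv.2 this) hp.le).trans le_self_add

end TruncatedKernel

section DensityBound

variable {ν : Measure E3} {A : Set E3}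

theorem le_densBound_mul {B : Set E3} (hBA : B ⊆ A) (hB : MeasurableSet B)
    (hBfin : volume B ≠ ∞) (hd : densBound ν A ≠ ∞) : ν B ≤ densBound ν A * volume B := by
  unfold densBound at hd ⊢
  have : Nonempty {M : ℝ≥0∞ | ∀ B ⊆ A, MeasurableSet B → ν B ≤ M * volume B} := by
    by_contra h
    rw [not_nonempty_iff, Set.isEmpty_coe_sort] at h
    exact hd (by rw [h, sInf_empty])
  rw [sInf_eq_iInf', ENNReal.iInf_mul fun h => absurd h hBfin]
  exact le_iInf fun M => M.2 B hBA hB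

theorem restrict_le_densBound_smul (hA : MeasurableSet A) (hAfin : volume A ≠ ∞)
    (hd : densBound ν A ≠ ∞) : ν.restrict A ≤ densBound ν A • volume.restrict A := by
  refine Measure.le_iff.2 fun s hs => ?_
  rw [Measure.restrict_apply hs, Measure.smul_apply, smul_eq_mul, Measure.restrict_apply hs]
  exact le_densBound_mul Set.inter_subset_right (hs.inter hA)
    (measure_ne_top_of_subset Set.inter_subset_right hAfin) hd

theorem setLIntegral_le_densBound_mul (hA : MeasurableSet A) (hAfin : volume A ≠ ∞)
    (hd : densBound ν A ≠ ∞) (f : E3 → ℝ≥0∞) :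
    ∫⁻ x in A, f x ∂ν ≤ densBound ν A * ∫⁻ x, f x :=
  calc ∫⁻ x in A, f x ∂ν ≤ ∫⁻ x, f x ∂(densBound ν A • volume.restrict A) :=
        lintegral_mono' (restrict_le_densBound_smul hA hAfin hd) le_rfl
    _ ≤ densBound ν A * ∫⁻ x, f x := by
        rw [lintegral_smul_measure, smul_eq_mul]
        gcongr
        exact Measure.restrict_le_self

end DensityBound

section Cells

theorem measurableSet_Wcube : MeasurableSet Wcube := by
  have : Wcube = ⋂ i, (fun x : E3 => x i) ⁻¹' Set.Ico (-(1:ℝ)/2) (1/2) := by ext; simp [Wcube]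
  rw [this]
  exact .iInter fun i => measurableSet_Ico.preimage (EuclideanSpace.proj i).continuous.measurable

theorem isBounded_Wcube : Bornology.IsBounded Wcube := by
  refine ((isCompact_Icc (a := fun _ : Fin 3 => -(1:ℝ)/2) (b := fun _ => 1/2)).image
    (EuclideanSpace.equiv (Fin 3) ℝ).symm.continuous).isBounded.subset fun x hx => ?_
  exact ⟨EuclideanSpace.equiv (Fin 3) ℝ x, ⟨fun i => (hx i).1, fun i => (hx i).2.le⟩, by simp⟩

theorem volume_Wcube_add_ball_ne_top (η : ℝ) : volume (Wcube + ball (0 : E3) η) ≠ ∞ :=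
  (isBounded_Wcube.add isBounded_ball).measure_lt_top.ne

def cell (j : Fin 3 → ℤ) : Set E3 := (latt j + ·) ⁻¹' Wcube

def cellNhd (η : ℝ) (j : Fin 3 → ℤ) : Set E3 := (· + latt j) ⁻¹' (Wcube + ball 0 η)

theorem measurableSet_cell (j : Fin 3 → ℤ) : MeasurableSet (cell j) :=
  measurableSet_Wcube.preimage (measurable_const_add _)

theorem measurableSet_cellNhd (η : ℝ) (j : Fin 3 → ℤ) : MeasurableSet (cellNhd η j) :=
  (isOpen_ball.add_left.preimage (continuous_add_const _)).measurableSet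

theorem volume_cellNhd (η : ℝ) (j : Fin 3 → ℤ) :
    volume (cellNhd η j) = volume (Wcube + ball (0 : E3) η) :=
  measure_preimage_add_right _ _ _

theorem volume_cellNhd_ne_top (η : ℝ) (j : Fin 3 → ℤ) : volume (cellNhd η j) ≠ ∞ := by
  rw [volume_cellNhd]
  exact volume_Wcube_add_ball_ne_top η

theorem cell_subset_cellNhd {η : ℝ} (hη : 0 < η) (j : Fin 3 → ℤ) : cell j ⊆ cellNhd η j :=
  fun x hx => ⟨latt j + x, hx, 0, mem_ball_self hη, by simp [add_comm]⟩

/-- `m_k = ‖ν‖_{L^∞(W + B_η - k)}`, except `m_0 := 0`: the density of `ν` near `W` itself may be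
infinite. -/
def nbhdDens (ν : Measure E3) (η : ℝ) (k : Fin 3 → ℤ) : ℝ≥0∞ :=
  if k = 0 then 0 else densBound ν (cellNhd η k)

theorem tsum_nbhdDens_rpow (ν : Measure E3) (η : ℝ) {q : ℝ} (hq : 0 < q) :
    ∑' k, nbhdDens ν η k ^ q = ∑' k : {k : Fin 3 → ℤ // k ≠ 0}, densBound ν (cellNhd η k) ^ q := by
  refine (tsum_congr fun k => ?_).trans
    (tsum_subtype {k | k ≠ 0} fun k => densBound ν (cellNhd η k) ^ q).symm
  by_cases hk : k = 0 <;> simp [nbhdDens, hk, hq]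

theorem measure_cell_le {ν : Measure E3} [IsProbabilityMeasure ν] {η : ℝ} (hη : 0 < η)
    (j : Fin 3 → ℤ) (hm : nbhdDens ν η j ≠ ∞) :
    ν (cell j) ≤ nbhdDens ν η j * volume (Wcube + ball (0 : E3) η) + if j = 0 then 1 else 0 := by
  by_cases hj : j = 0
  · subst hj
    simpa [nbhdDens] using prob_le_one
  · simp only [nbhdDens, hj, if_false, add_zero] at hm ⊢
    rw [← volume_cellNhd η j]
    calc ν (cell j) ≤ densBound ν (cellNhd η j) * volume (cell j) :=
          le_densBound_mul (cell_subset_cellNhd hη j) (measurableSet_cell j)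
            (measure_ne_top_of_subset (cell_subset_cellNhd hη j) (volume_cellNhd_ne_top η j)) hm
      _ ≤ densBound ν (cellNhd η j) * volume (cellNhd η j) := by
          gcongr; exact cell_subset_cellNhd hη j

end Cells

section PairEstimates

variable {ν : Measure E3} {η p : ℝ}

def pairTerm (η p : ℝ) (j k : Fin 3 → ℤ) (x y : E3) : ℝ≥0∞ :=
  (cell j).indicator (fun x => truncInvPow η p (latt j + x - (latt k + y))) x

theorem measurable_pairTerm (η p : ℝ) (j k : Fin 3 → ℤ) :
    Measurable fun z : E3 × E3 => pairTerm η p j k z.1 z.2 :=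
  ((measurable_truncInvPow η p).comp (by fun_prop)).indicator
    ((measurableSet_cell j).preimage measurable_fst)

theorem lintegral_pairTerm_le_right [SFinite ν] (j k : Fin 3 → ℤ)
    (hd : densBound ν (cellNhd η k) ≠ ∞) :
    ∫⁻ z, pairTerm η p j k z.1 z.2 ∂(ν.prod ν)
      ≤ ν (cell j) * (densBound ν (cellNhd η k) * ∫⁻ x : E3, truncInvPow η p x) := by
  rw [lintegral_prod _ (measurable_pairTerm η p j k).aemeasurable, mul_comm,
    ← lintegral_indicator_const (measurableSet_cell j)]
  refine lintegral_mono fun x => ?_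
  by_cases hx : x ∈ cell j
  · simp only [pairTerm, Set.indicator_of_mem hx]
    have hsupp : (fun y => truncInvPow η p (latt j + x - (latt k + y))).support ⊆ cellNhd η k :=
      fun y hy => by
        simpa [cellNhd, add_comm] using mem_add_ball_of_truncInvPow_ne_zero (s := Wcube) hx hy
    calc ∫⁻ y, truncInvPow η p (latt j + x - (latt k + y)) ∂ν
        = ∫⁻ y in cellNhd η k, truncInvPow η p (latt j + x - latt k - y) ∂ν := by
          simp_rw [← sub_sub]
          exact (setLIntegral_eq_of_support_subset (by simpa only [sub_sub] using hsupp)).symm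
      _ ≤ densBound ν (cellNhd η k) * ∫⁻ y, truncInvPow η p (latt j + x - latt k - y) :=
          setLIntegral_le_densBound_mul (measurableSet_cellNhd η k) (volume_cellNhd_ne_top η k) hd _
      _ = densBound ν (cellNhd η k) * ∫⁻ x : E3, truncInvPow η p x := by
          rw [lintegral_sub_left_eq_self]
  · simp [pairTerm, hx]

theorem lintegral_pairTerm_le_left [IsProbabilityMeasure ν] (hη : 0 < η) (j k : Fin 3 → ℤ)
    (hd : densBound ν (cellNhd η j) ≠ ∞) :
    ∫⁻ z, pairTerm η p j k z.1 z.2 ∂(ν.prod ν)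
      ≤ densBound ν (cellNhd η j) * ∫⁻ x : E3, truncInvPow η p x := by
  set M := densBound ν (cellNhd η j)
  have inner (y : E3) : ∫⁻ x, pairTerm η p j k x y ∂ν ≤ M * ∫⁻ x : E3, truncInvPow η p x := calc
    _ ≤ ∫⁻ x in cellNhd η j, truncInvPow η p (latt j + x - (latt k + y)) ∂ν := by
        rw [← lintegral_indicator (measurableSet_cellNhd η j)]
        exact lintegral_mono
          (Set.indicator_le_indicator_of_subset (cell_subset_cellNhd hη j) fun _ => zero_le)
    _ ≤ M * ∫⁻ x, truncInvPow η p (latt j + x - (latt k + y)) :=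
        setLIntegral_le_densBound_mul (measurableSet_cellNhd η j) (volume_cellNhd_ne_top η j) hd _
    _ = M * ∫⁻ x : E3, truncInvPow η p x := by
        rw [← lintegral_sub_right_eq_self (truncInvPow η p) (latt k + y - latt j)]
        congr 2 with x
        congr 1
        abel
  calc ∫⁻ z, pairTerm η p j k z.1 z.2 ∂(ν.prod ν)
      = ∫⁻ y, ∫⁻ x, pairTerm η p j k x y ∂ν ∂ν :=
        lintegral_prod_symm _ (measurable_pairTerm η p j k).aemeasurable
    _ ≤ ∫⁻ _ : E3, (M * ∫⁻ x : E3, truncInvPow η p x) ∂ν := lintegral_mono inner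
    _ = M * ∫⁻ x : E3, truncInvPow η p x := by simp

variable [IsProbabilityMeasure ν]

theorem lintegral_pairTerm_le_nbhdDens (hη : 0 < η) {j k : Fin 3 → ℤ} (hkj : k ≠ j)
    (hm : ∀ k, nbhdDens ν η k ≠ ∞) :
    ∫⁻ z, pairTerm η p j k z.1 z.2 ∂(ν.prod ν)
      ≤ ν (cell j) * (nbhdDens ν η k * ∫⁻ x : E3, truncInvPow η p x)
        + if k = 0 then nbhdDens ν η j * ∫⁻ x : E3, truncInvPow η p x else 0 := by
  by_cases hk : k = 0
  · subst hk
    have hj : j ≠ 0 := hkj.symm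
    have := hm j
    simp only [nbhdDens, hj, if_true, if_false] at this ⊢
    exact (lintegral_pairTerm_le_left hη j 0 this).trans le_add_self
  · have := hm k
    simp only [nbhdDens, hk, if_false, add_zero] at this ⊢
    exact lintegral_pairTerm_le_right j k this

theorem tsum_lintegral_pairTerm_le (hη : 0 < η) (hm : ∀ k, nbhdDens ν η k ≠ ∞)
    (j : Fin 3 → ℤ) :
    ∑' k : {k // k ≠ j}, ∫⁻ z, pairTerm η p j k z.1 z.2 ∂(ν.prod ν)
      ≤ ν (cell j) * ((∑' k, nbhdDens ν η k) * ∫⁻ x : E3, truncInvPow η p x)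
        + nbhdDens ν η j * ∫⁻ x : E3, truncInvPow η p x := by
  set C := ∫⁻ x : E3, truncInvPow η p x
  calc ∑' k : {k // k ≠ j}, ∫⁻ z, pairTerm η p j k z.1 z.2 ∂(ν.prod ν)
      ≤ ∑' k : {k // k ≠ j}, (ν (cell j) * (nbhdDens ν η k * C)
          + if (k : Fin 3 → ℤ) = 0 then nbhdDens ν η j * C else 0) :=
        ENNReal.tsum_le_tsum fun k => lintegral_pairTerm_le_nbhdDens hη k.2 hm
    _ ≤ ∑' k, (ν (cell j) * (nbhdDens ν η k * C) + if k = 0 then nbhdDens ν η j * C else 0) :=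
        ENNReal.tsum_comp_le_tsum_of_injective Subtype.val_injective
          (fun k => ν (cell j) * (nbhdDens ν η k * C) + if k = 0 then nbhdDens ν η j * C else 0)
    _ = ν (cell j) * ((∑' k, nbhdDens ν η k) * C) + nbhdDens ν η j * C := by
        rw [ENNReal.tsum_add, ENNReal.tsum_mul_left, ENNReal.tsum_mul_right, tsum_ite_eq]

end PairEstimates

section PerturbedLattice

def X1Term {Ω : Type*} (r : (Fin 3 → ℤ) → Ω → E3) (j : Fin 3 → ℤ) (ω : Ω) : ℝ≥0∞ :=
  Wcube.indicator (fun _ => (nnd r j ω)⁻¹) (latt j + r j ω)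

variable {Ω : Type*} {r : (Fin 3 → ℤ) → Ω → E3}

theorem X1Term_rpow_le (j : Fin 3 → ℤ) (ω : Ω) (η : ℝ) {p : ℝ} (hp : 0 < p) :
    X1Term r j ω ^ p ≤ (cell j).indicator (fun _ => (ENNReal.ofReal η)⁻¹ ^ p) (r j ω)
      + ∑' k : {k // k ≠ j}, pairTerm η p j k (r j ω) (r k ω) := by
  by_cases h : r j ω ∈ cell j
  · rw [X1Term, Set.indicator_of_mem (show latt j + r j ω ∈ Wcube from h),
      Set.indicator_of_mem h]
    simp only [pairTerm, Set.indicator_of_mem h]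
    exact inv_iInf_edist_rpow_le _ _ η hp
  · rw [X1Term, Set.indicator_of_notMem (show latt j + r j ω ∉ Wcube from h),
      zero_rpow_of_pos hp]
    exact zero_le

variable [MeasurableSpace Ω]

theorem measurable_nnd (hmeas : ∀ j, Measurable (r j)) (j : Fin 3 → ℤ) :
    Measurable (nnd r j) :=
  .iInf fun k => ((hmeas j).const_add _).edist ((hmeas k).const_add _)

theorem measurable_X1Term (hmeas : ∀ j, Measurable (r j)) (j : Fin 3 → ℤ) :
    Measurable (X1Term r j) := by
  have : X1Term r j = (r j ⁻¹' cell j).indicator fun ω => (nnd r j ω)⁻¹ := rfl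
  rw [this]
  exact (measurable_nnd hmeas j).inv.indicator ((measurableSet_cell j).preimage (hmeas j))

variable {P : Measure Ω} [IsProbabilityMeasure P] {ν : Measure E3} {η p : ℝ}

theorem lintegral_X1Term_rpow_le (hmeas : ∀ j, Measurable (r j)) (hindep : iIndepFun r P)
    (hlaw : ∀ j, P.map (r j) = ν) (hp : 0 < p) (j : Fin 3 → ℤ) :
    ∫⁻ ω, X1Term r j ω ^ p ∂P ≤ (ENNReal.ofReal η)⁻¹ ^ p * ν (cell j)
      + ∑' k : {k // k ≠ j}, ∫⁻ z, pairTerm η p j k z.1 z.2 ∂(ν.prod ν) := by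
  calc ∫⁻ ω, X1Term r j ω ^ p ∂P
      ≤ ∫⁻ ω, ((cell j).indicator (fun _ => (ENNReal.ofReal η)⁻¹ ^ p) (r j ω)
          + ∑' k : {k // k ≠ j}, pairTerm η p j k (r j ω) (r k ω)) ∂P :=
        lintegral_mono fun ω => X1Term_rpow_le j ω η hp
    _ = _ := by
        rw [lintegral_add_left (f := fun ω => (cell j).indicator _ (r j ω))
            ((measurable_const.indicator (measurableSet_cell j)).comp (hmeas j)),
          lintegral_indicator_const_comp (hmeas j) (measurableSet_cell j),
          ← Measure.map_apply (hmeas j) (measurableSet_cell j), hlaw j,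
          lintegral_tsum (f := fun (k : {k // k ≠ j}) ω => pairTerm η p j k (r j ω) (r k ω))
            fun k => ((measurable_pairTerm η p j k).comp ((hmeas j).prodMk (hmeas k))).aemeasurable]
        congr 1
        refine tsum_congr fun k => ?_
        rw [(hindep.indepFun k.2.symm).lintegral_comp_eq_lintegral_prod (hmeas j) (hmeas k)
          (measurable_pairTerm η p j k), hlaw j, hlaw k]

theorem lintegral_X1Term_rpow_le_nbhdDens [IsProbabilityMeasure ν]
    (hmeas : ∀ j, Measurable (r j)) (hindep : iIndepFun r P) (hlaw : ∀ j, P.map (r j) = ν)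
    (hη : 0 < η) (hp : 0 < p) (hm : ∀ k, nbhdDens ν η k ≠ ∞) (j : Fin 3 → ℤ) :
    let C := ∫⁻ x : E3, truncInvPow η p x
    let D := (ENNReal.ofReal η)⁻¹ ^ p + (∑' k, nbhdDens ν η k) * C
    ∫⁻ ω, X1Term r j ω ^ p ∂P
      ≤ nbhdDens ν η j * (volume (Wcube + ball (0 : E3) η) * D + C) + if j = 0 then D else 0 := by
  intro C D
  calc ∫⁻ ω, X1Term r j ω ^ p ∂P
      ≤ (ENNReal.ofReal η)⁻¹ ^ p * ν (cell j)
        + (ν (cell j) * ((∑' k, nbhdDens ν η k) * C) + nbhdDens ν η j * C) :=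
        (lintegral_X1Term_rpow_le hmeas hindep hlaw hp j).trans
          (add_le_add le_rfl (tsum_lintegral_pairTerm_le hη hm j))
    _ = ν (cell j) * D + nbhdDens ν η j * C := by ring
    _ ≤ (nbhdDens ν η j * volume (Wcube + ball (0 : E3) η) + if j = 0 then 1 else 0) * D
          + nbhdDens ν η j * C := by
        gcongr; exact measure_cell_le hη j (hm j)
    _ = _ := by split_ifs <;> ring

end PerturbedLattice

/-- If the `r_j` are independent with common law `ν` and
`Σ_{j ≠ 0} ‖ν‖_{L^∞(W + B_η − j)}^{1/p} < ∞` for some `η > 0` and some `1 ≤ p < 3`,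
then `E(X₁^p) < ∞`, i.e. `X₁ ∈ L^p(Ω)`. -/
theorem X1_in_Lp
    (ν : Measure E3) [IsProbabilityMeasure ν]
    {Ω : Type*} [MeasurableSpace Ω] (P : Measure Ω) [IsProbabilityMeasure P]
    (r : (Fin 3 → ℤ) → Ω → E3) (hmeas : ∀ j, Measurable (r j))
    (hindep : iIndepFun r P)
    (hlaw : ∀ j, P.map (r j) = ν)
    (η : ℝ) (hη : 0 < η) (p : ℝ) (hp1 : 1 ≤ p) (hp3 : p < 3)
    (hsum : ∑' j : {j : Fin 3 → ℤ // j ≠ 0},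
        (densBound ν ((fun x => x + latt (j : Fin 3 → ℤ)) ⁻¹' (Wcube + Metric.ball (0 : E3) η)))
          ^ (1 / p) < ⊤) :
    ∫⁻ ω, X1 r ω ^ p ∂P < ⊤ := by
  have hp0 : 0 < p := by linarith
  have hq : 0 < 1 / p := by positivity
  have hq1 : 1 / p ≤ 1 := (div_le_one hp0).2 hp1
  have hm : ∑' k, nbhdDens ν η k ^ (1 / p) < ∞ := by rwa [tsum_nbhdDens_rpow ν η hq]
  have hS : ∑' k, nbhdDens ν η k < ∞ :=
    (rpow_lt_top_iff_of_pos hq).1 ((rpow_tsum_le_tsum_rpow _ hq hq1).trans_lt hm)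
  have hmk (k) : nbhdDens ν η k ≠ ∞ := ne_top_of_le_ne_top hS.ne (ENNReal.le_tsum k)
  have hC : ∫⁻ x : E3, truncInvPow η p x < ∞ :=
    lintegral_truncInvPow_lt_top volume η (by simpa using hp3)
  have hV := volume_Wcube_add_ball_ne_top η
  have hηp : (ENNReal.ofReal η)⁻¹ ^ p < ∞ :=
    rpow_lt_top_of_nonneg hp0.le (inv_ne_top.2 (ofReal_pos.2 hη).ne')
  calc ∫⁻ ω, X1 r ω ^ p ∂P ≤ (∑' j, (∫⁻ ω, X1Term r j ω ^ p ∂P) ^ (1 / p)) ^ p :=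
        lintegral_tsum_rpow_le (fun j => (measurable_X1Term hmeas j).aemeasurable) hp1
    _ < ∞ := rpow_lt_top_of_nonneg hp0.le (tsum_rpow_lt_top_of_le hq hq1 hm
        (by finiteness) (by finiteness) 0
        (lintegral_X1Term_rpow_le_nbhdDens hmeas hindep hlaw hη hp0 hmk)).ne
end
end

section
/- Assume the family (r_j)_{j∈ℤ³} is independent, each with law ν, and that there exist κ > 0, a point v with the ball B_κ(v) contained in W, and two distinct indices i ≠ j in ℤ³, such that ν(A) ≥ κ·λ(A) for every Borel set A ⊆ (B_κ(v) − i) ∪ (B_κ(v) − j). Then E(X₁³) = ∞, i.e. X₁ ∉ L³(Ω). -/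
open MeasureTheory ProbabilityTheory ENNReal

noncomputable section

/-!
On the event `i + r_i ∈ B_κ(v) ⊆ W` the `i`-th term of `X₁` is at least `|i + r_i - j - r_j|⁻¹`.
Since `r_i` and `r_j` are independent with law `ν`, `E X₁³` dominates
`∫_{B_κ(v) - i} ∫ |x + i - y - j|⁻³ dν(y) dν(x)`. For each such `x` the inner integral is at least
`κ ∫_{B_κ(v) - j} |x + i - y - j|⁻³ dy`, and the singularity `|z|⁻³` at the interior point
`z = x + i` of `B_κ(v)` is not integrable in dimension three. Finally `ν(B_κ(v) - i) ≥ κ λ(B_κ(v)) > 0`.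
-/

open Metric Module Set

theorem const_mul_setLIntegral_le_lintegral {α : Type*} [MeasurableSpace α] {μ ν : Measure α}
    {S : Set α} (hS : MeasurableSet S) {c : ℝ≥0∞}
    (hle : ∀ A, MeasurableSet A → A ⊆ S → c * μ A ≤ ν A) (f : α → ℝ≥0∞) :
    c * ∫⁻ x in S, f x ∂μ ≤ ∫⁻ x, f x ∂ν := by
  have hrestrict : c • μ.restrict S ≤ ν.restrict S := Measure.le_iff.2 fun A hA => by
    rw [Measure.smul_apply, smul_eq_mul, Measure.restrict_apply hA, Measure.restrict_apply hA]
    exact hle _ (hA.inter hS) inter_subset_right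
  calc c * ∫⁻ x in S, f x ∂μ = ∫⁻ x, f x ∂(c • μ.restrict S) := by
        rw [lintegral_smul_measure, smul_eq_mul]
    _ ≤ ∫⁻ x, f x ∂(ν.restrict S) := lintegral_mono' hrestrict le_rfl
    _ ≤ ∫⁻ x, f x ∂ν := lintegral_mono' Measure.restrict_le_self le_rfl

section Singularity

variable {E : Type*} [NormedAddCommGroup E] [NormedSpace ℝ E] [FiniteDimensional ℝ E]
  [MeasurableSpace E] [BorelSpace E] [Nontrivial E] (μ : Measure E) [μ.IsAddHaarMeasure]

theorem not_integrableOn_ball_norm_rpow_neg_finrank {r : ℝ} (hr : 0 < r) :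
    ¬ IntegrableOn (fun x : E => ‖x‖ ^ (-(finrank ℝ E : ℝ))) (ball 0 r) μ := by
  rw [integrableOn_fun_norm_addHaar μ (f := fun y : ℝ => y ^ (-(finrank ℝ E : ℝ)))]
  intro h
  -- in polar coordinates the integrand becomes `y ^ (d - 1) * y ^ (-d) = y⁻¹`
  have hinv : IntegrableOn (fun y : ℝ => y ^ (-1 : ℝ)) (Ioo 0 r) := by
    refine h.congr_fun (fun y hy => ?_) measurableSet_Ioo
    have hd : ((finrank ℝ E - 1 : ℕ) : ℝ) = finrank ℝ E - 1 := by
      rw [Nat.cast_sub finrank_pos]; simp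
    simp only [smul_eq_mul]
    rw [← Real.rpow_natCast, hd, ← Real.rpow_add hy.1]
    ring_nf
  exact absurd ((intervalIntegral.integrableOn_Ioo_rpow_iff hr).1 hinv) (by norm_num)

theorem setLIntegral_ball_enorm_rpow_neg_finrank {r : ℝ} (hr : 0 < r) :
    ∫⁻ x in ball 0 r, ‖x‖ₑ ^ (-(finrank ℝ E : ℝ)) ∂μ = ⊤ := by
  have hofReal : ∫⁻ x in ball 0 r, ENNReal.ofReal (‖x‖ ^ (-(finrank ℝ E : ℝ))) ∂μ = ⊤ := by
    by_contra h
    refine not_integrableOn_ball_norm_rpow_neg_finrank μ hr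
      ((lintegral_ofReal_ne_top_iff_integrable ?_ ?_).1 h)
    · exact (continuous_norm.measurable.pow_const _).aestronglyMeasurable
    · exact ae_of_all _ fun x => by positivity
  refine top_unique (hofReal ▸ lintegral_mono fun x => ?_)
  rcases eq_or_ne x 0 with rfl | hx
  · rw [enorm_zero, ENNReal.zero_rpow_of_neg (by simp [finrank_pos])]
    exact le_top
  · rw [← ofReal_norm, ENNReal.ofReal_rpow_of_pos (norm_pos_iff.2 hx)]

theorem lintegral_edist_rpow_neg_finrank_eq_top {ν : Measure E} {c : ℝ≥0∞} (hc : c ≠ 0)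
    {B : Set E} (hB : IsOpen B) {p : E} (hp : p ∈ B) (t : E)
    (hle : ∀ A, MeasurableSet A → A ⊆ (· + t) ⁻¹' B → c * μ A ≤ ν A) :
    ∫⁻ y, edist p (y + t) ^ (-(finrank ℝ E : ℝ)) ∂ν = ⊤ := by
  obtain ⟨ε, hε, hpB⟩ := Metric.isOpen_iff.1 hB p hp
  have hsub : (· + (t - p)) ⁻¹' ball 0 ε ⊆ (· + t) ⁻¹' B := fun y hy => by
    apply hpB
    rwa [mem_preimage, mem_ball_zero_iff, ← add_sub_assoc, ← dist_eq_norm] at hy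
  have hshift : ∀ y, ‖y + (t - p)‖ₑ = edist p (y + t) := fun y => by
    rw [edist_comm, edist_eq_enorm_sub, add_sub_assoc]
  refine top_unique ?_
  calc ⊤ = c * ∫⁻ z in ball 0 ε, ‖z‖ₑ ^ (-(finrank ℝ E : ℝ)) ∂μ := by
        rw [setLIntegral_ball_enorm_rpow_neg_finrank μ hε, ENNReal.mul_top hc]
    _ = c * ∫⁻ y in (· + (t - p)) ⁻¹' ball 0 ε, ‖y + (t - p)‖ₑ ^ (-(finrank ℝ E : ℝ)) ∂μ := by
        rw [(measurePreserving_add_right μ (t - p)).setLIntegral_comp_preimage_emb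
          (measurableEmbedding_addRight _) (fun z => ‖z‖ₑ ^ (-(finrank ℝ E : ℝ)))]
    _ ≤ ∫⁻ y, ‖y + (t - p)‖ₑ ^ (-(finrank ℝ E : ℝ)) ∂ν :=
        const_mul_setLIntegral_le_lintegral (measurableSet_ball.preimage (measurable_add_const _))
          (fun A hA hAS => hle A hA (hAS.trans hsub)) _
    _ = ∫⁻ y, edist p (y + t) ^ (-(finrank ℝ E : ℝ)) ∂ν := by simp only [hshift]

end Singularity

theorem lintegral_prod_eq_top_of_forall_mem {α β : Type*} [MeasurableSpace α] [MeasurableSpace β]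
    {μ : Measure α} {ν : Measure β} [SFinite ν] {F : α × β → ℝ≥0∞} (hF : Measurable F)
    {S : Set α} (hS : MeasurableSet S) (hμS : μ S ≠ 0) (htop : ∀ x ∈ S, ∫⁻ y, F (x, y) ∂ν = ⊤) :
    ∫⁻ q, F q ∂(μ.prod ν) = ⊤ := by
  refine top_unique ?_
  calc ⊤ = ∫⁻ _ in S, ⊤ ∂μ := by rw [setLIntegral_const, ENNReal.top_mul hμS]
    _ ≤ ∫⁻ x in S, ∫⁻ y, F (x, y) ∂ν ∂μ := setLIntegral_mono' hS fun x hx => (htop x hx).ge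
    _ ≤ ∫⁻ x, ∫⁻ y, F (x, y) ∂ν ∂μ := setLIntegral_le_lintegral _ _
    _ = ∫⁻ q, F q ∂(μ.prod ν) := (lintegral_prod F hF.aemeasurable).symm

theorem ProbabilityTheory.IndepFun.lintegral_comp_prodMk {Ω α β : Type*} [MeasurableSpace Ω]
    [MeasurableSpace α] [MeasurableSpace β] {P : Measure Ω} [IsFiniteMeasure P] {X : Ω → α}
    {Y : Ω → β} (hXY : IndepFun X Y P) (hX : Measurable X) (hY : Measurable Y)
    {F : α × β → ℝ≥0∞} (hF : Measurable F) :
    ∫⁻ ω, F (X ω, Y ω) ∂P = ∫⁻ q, F q ∂((P.map X).prod (P.map Y)) := by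
  rw [← hXY.map_prod_eq_prod_map_map hX.aemeasurable hY.aemeasurable,
    lintegral_map hF (hX.prodMk hY)]

theorem inv_edist_le_X1 {Ω : Type*} (r : (Fin 3 → ℤ) → Ω → E3) (ω : Ω) {i j : Fin 3 → ℤ}
    (hij : i ≠ j) (hW : r i ω + latt i ∈ Wcube) :
    (edist (r i ω + latt i) (r j ω + latt j))⁻¹ ≤ X1 r ω := by
  have hnnd : nnd r i ω ≤ edist (latt i + r i ω) (latt j + r j ω) :=
    iInf_le (fun k : {k // k ≠ i} => edist (latt i + r i ω) (latt k + r k ω)) ⟨j, hij.symm⟩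
  calc (edist (r i ω + latt i) (r j ω + latt j))⁻¹
      = (edist (latt i + r i ω) (latt j + r j ω))⁻¹ := by rw [add_comm (r i ω), add_comm (r j ω)]
    _ ≤ (nnd r i ω)⁻¹ := ENNReal.inv_le_inv.2 hnnd
    _ = Wcube.indicator (fun _ => (nnd r i ω)⁻¹) (latt i + r i ω) := by
        rw [indicator_of_mem (by rwa [add_comm])]
    _ ≤ X1 r ω := ENNReal.le_tsum i

/-- If the `r_j` are independent with common law `ν` and there are `κ > 0`,
a ball `B_κ(v) ⊆ W` and distinct `i ≠ j` in `ℤ³` such that `ν ≥ κ·λ` on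
`(B_κ(v) − i) ∪ (B_κ(v) − j)`, then `E(X₁³) = ∞`, i.e. `X₁ ∉ L³(Ω)`. -/
theorem X1_not_in_L3
    (ν : Measure E3) [IsProbabilityMeasure ν]
    {Ω : Type*} [MeasurableSpace Ω] (P : Measure Ω) [IsProbabilityMeasure P]
    (r : (Fin 3 → ℤ) → Ω → E3) (hmeas : ∀ j, Measurable (r j))
    (hindep : iIndepFun r P)
    (hlaw : ∀ j, P.map (r j) = ν)
    (κ : ℝ) (hκ : 0 < κ) (v : E3) (hball : Metric.ball v κ ⊆ Wcube)
    (i j : Fin 3 → ℤ) (hij : i ≠ j)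
    (hlower : ∀ A : Set E3, MeasurableSet A →
        A ⊆ ((fun x => x + latt i) ⁻¹' Metric.ball v κ) ∪
            ((fun x => x + latt j) ⁻¹' Metric.ball v κ) →
        ENNReal.ofReal κ * volume A ≤ ν A) :
    ∫⁻ ω, X1 r ω ^ (3 : ℝ) ∂P = ⊤ := by
  set Si := (fun x => x + latt i) ⁻¹' ball v κ
  have hSi : MeasurableSet Si := measurableSet_ball.preimage (measurable_add_const _)
  set F : E3 × E3 → ℝ≥0∞ := (Prod.fst ⁻¹' Si).indicator
    fun q => edist (q.1 + latt i) (q.2 + latt j) ^ (-(finrank ℝ E3 : ℝ)) with hF_def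
  have hF : Measurable F := Measurable.indicator (by fun_prop) (measurable_fst hSi)
  have hc : ENNReal.ofReal κ ≠ 0 := by simpa using hκ
  have hνSi : ν Si ≠ 0 := by
    have hSi_le := hlower Si hSi subset_union_left
    rw [measure_preimage_add_right] at hSi_le
    exact ((ENNReal.mul_pos hc (measure_ball_pos volume v hκ).ne').trans_le hSi_le).ne'
  have hinner : ∀ x ∈ Si, ∫⁻ y, F (x, y) ∂ν = ⊤ := fun x hx => by
    have hFx : ∀ y, F (x, y) = edist (x + latt i) (y + latt j) ^ (-(finrank ℝ E3 : ℝ)) :=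
      fun y => by rw [hF_def, indicator_of_mem (show (x, y) ∈ Prod.fst ⁻¹' Si from hx)]
    have hxB : x + latt i ∈ ball v κ := hx
    simp only [hFx]
    exact lintegral_edist_rpow_neg_finrank_eq_top volume hc isOpen_ball hxB (latt j)
      fun A hA hAS => hlower A hA (hAS.trans subset_union_right)
  have hbound : ∀ ω, F (r i ω, r j ω) ≤ X1 r ω ^ (3 : ℝ) := fun ω => by
    by_cases h : r i ω ∈ Si
    · rw [hF_def, indicator_of_mem (show (r i ω, r j ω) ∈ Prod.fst ⁻¹' Si from h),
        finrank_euclideanSpace_fin, ENNReal.rpow_neg, ← ENNReal.inv_rpow]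
      exact ENNReal.rpow_le_rpow (inv_edist_le_X1 r ω hij (hball h)) (by norm_num)
    · rw [hF_def, indicator_of_notMem (show (r i ω, r j ω) ∉ Prod.fst ⁻¹' Si from h)]
      exact zero_le
  refine top_unique ?_
  calc ⊤ = ∫⁻ q, F q ∂(ν.prod ν) := (lintegral_prod_eq_top_of_forall_mem hF hSi hνSi hinner).symm
    _ = ∫⁻ ω, F (r i ω, r j ω) ∂P := by
        rw [(hindep.indepFun hij).lintegral_comp_prodMk (hmeas i) (hmeas j) hF, hlaw, hlaw]
    _ ≤ ∫⁻ ω, X1 r ω ^ (3 : ℝ) ∂P := lintegral_mono hbound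
end
end

section
/- For every integer N ≥ 1, all pairwise distinct points y₁, …, y_N ∈ ℝ³ and all real numbers q₁, …, q_N, one has Σ_{1 ≤ i, j ≤ N, i ≠ j} q_i q_j · (1 − e^{−|y_i − y_j|}) / |y_i − y_j| ≥ − Σ_{i=1}^N q_i². Equivalently, replacing the Coulomb potential 1/|x| by the Yukawa potential e^{−|x|}/|x| in the pairwise interaction of N point charges lowers the total interaction energy by at most Σ_i q_i². -/
/-!
Since `(1 - e^{-r}) / r = ∫₀¹ e^{-t r} dt`, with value `1` at `r = 0`, it suffices that every
kernel `e^{-t |x - y|}`, `t ≥ 0`, is positive semidefinite. Writing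
`e^{-t |x - y|} = e^{-t |x|} e^{-t |y|} e^{t (|x| + |y| - |x - y|)}`, this follows from the Schur
product theorem once `|x| + |y| - |x - y|` is positive semidefinite, since entrywise `exp`
preserves positive semidefiniteness through its power series. Averaging `|⟪k, x⟫|` over `k` in
the unit ball gives a rotation-invariant multiple of `|x|`, which reduces that claim to the
one-dimensional identity `|a| + |b| - |a - b| = 2 min(a⁺, b⁺) + 2 min(a⁻, b⁻)`; the kernel
`min(a, b)` on `a, b ≥ 0` is the Gram matrix of the indicators of `[0, a]`, `[0, b]` in `L²`.
-/

open Real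

noncomputable section

open MeasureTheory Metric Matrix RealInnerProductSpace

theorem abs_add_abs_sub_abs_sub (a b : ℝ) :
    |a| + |b| - |a - b| = 2 * min a⁺ b⁺ + 2 * min (-a)⁺ (-b)⁺ := by
  rcases le_total 0 a with ha | ha <;> rcases le_total 0 b with hb | hb <;>
    rcases le_total a b with hab | hab <;>
    simp [abs_of_nonneg, abs_of_nonpos, *] <;>
    linarith

theorem intervalIntegral_exp_neg_mul {r : ℝ} (hr : r ≠ 0) :
    ∫ t in (0 : ℝ)..1, rexp (-(t * r)) = (1 - rexp (-r)) / r := by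
  simp_rw [neg_mul_eq_mul_neg]
  rw [intervalIntegral.integral_comp_mul_right _ (neg_ne_zero.2 hr), zero_mul, one_mul,
    integral_exp, exp_zero, smul_eq_mul]
  field_simp
  ring

namespace Matrix

variable {ι : Type*} [Fintype ι]

theorem posSemidef_of_integral {α : Type*} [MeasurableSpace α] {μ : Measure α}
    {K : α → Matrix ι ι ℝ} (hK : ∀ i j, Integrable (fun a => K a i j) μ)
    (hpsd : ∀ᵐ a ∂μ, (K a).PosSemidef) :
    (of fun i j => ∫ a, K a i j ∂μ).PosSemidef := by
  refine .of_dotProduct_mulVec_nonneg ?_ fun x => ?_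
  · ext i j
    exact integral_congr_ae (hpsd.mono fun a ha => ha.isHermitian.apply i j)
  · have hform : star x ⬝ᵥ (of fun i j => ∫ a, K a i j ∂μ) *ᵥ x
        = ∫ a, star x ⬝ᵥ K a *ᵥ x ∂μ := by
      simp only [dotProduct, mulVec, of_apply, Pi.star_apply, star_trivial]
      rw [integral_finsetSum _ fun i _ => (integrable_finsetSum _ fun j _ =>
        ((hK i j).mul_const _)).const_mul _]
      refine Finset.sum_congr rfl fun i _ => ?_
      rw [integral_const_mul, integral_finsetSum _ fun j _ => (hK i j).mul_const _]
      simp only [integral_mul_const]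
    rw [hform]
    exact integral_nonneg_of_ae (hpsd.mono fun a ha => ha.dotProduct_mulVec_nonneg x)

theorem posSemidef_min {x : ι → ℝ} (hx : ∀ i, 0 ≤ x i) :
    (of fun i j => min (x i) (x j)).PosSemidef := by
  convert posSemidef_matrix_measure_inter (μ := volume) (s := fun i => Set.Icc 0 (x i))
    (fun _ => measurableSet_Icc) (fun _ => measure_Icc_lt_top.ne) using 1
  ext i j
  simp [Set.Icc_inter_Icc, hx i, hx j]

theorem posSemidef_abs_add_abs_sub_abs_sub (a : ι → ℝ) :
    (of fun i j => |a i| + |a j| - |a i - a j|).PosSemidef := by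
  have h : (of fun i j => |a i| + |a j| - |a i - a j|) = (2 : ℝ) • (of fun i j => min (a i)⁺ (a j)⁺)
      + (2 : ℝ) • of fun i j => min (-a i)⁺ (-a j)⁺ := by
    ext i j
    simp [abs_add_abs_sub_abs_sub]
  rw [h]
  exact ((posSemidef_min fun i => posPart_nonneg (a i)).smul zero_le_two).add
    ((posSemidef_min fun i => posPart_nonneg (-a i)).smul zero_le_two)

theorem PosSemidef.map_pow {G : Matrix ι ι ℝ} (hG : G.PosSemidef) (n : ℕ) :
    (G.map (· ^ n)).PosSemidef := by
  induction n with
  | zero =>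
    convert posSemidef_vecMulVec_self_star (1 : ι → ℝ) using 1
    ext i j
    simp [vecMulVec]
  | succ n ih =>
    have h : G.map (· ^ (n + 1)) = G.map (· ^ n) ⊙ G := by ext i j; simp [pow_succ]
    exact h ▸ ih.hadamard hG

theorem PosSemidef.map_exp {G : Matrix ι ι ℝ} (hG : G.PosSemidef) :
    (G.map rexp).PosSemidef := by
  refine .of_dotProduct_mulVec_nonneg (hG.isHermitian.map _ fun _ => rfl) fun x => ?_
  have hexp (a : ℝ) : HasSum (fun n : ℕ => a ^ n / n.factorial) (rexp a) := by
    rw [Real.exp_eq_exp_ℝ]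
    exact NormedSpace.expSeries_div_hasSum_exp a
  have hsum : HasSum (fun n : ℕ => star x ⬝ᵥ (((n.factorial : ℝ)⁻¹ • G.map (· ^ n)) *ᵥ x))
      (star x ⬝ᵥ (G.map rexp *ᵥ x)) := by
    simp only [dotProduct, mulVec, smul_apply, map_apply, smul_eq_mul, inv_mul_eq_div]
    exact hasSum_sum fun i _ =>
      (hasSum_sum fun j _ => (hexp (G i j)).mul_right (x j)).mul_left (star x i)
  exact hsum.nonneg fun n =>
    ((hG.map_pow n).smul (inv_nonneg.2 n.factorial.cast_nonneg)).dotProduct_mulVec_nonneg x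

end Matrix

section InnerProductSpace

variable {V : Type*} [NormedAddCommGroup V] [InnerProductSpace ℝ V] [FiniteDimensional ℝ V]
  {ι : Type*} [Fintype ι]

section Measure

variable [MeasurableSpace V] [BorelSpace V]

theorem integrableOn_closedBall_abs_inner (z : V) :
    IntegrableOn (fun k => |⟪k, z⟫|) (closedBall 0 1) :=
  (continuous_id.inner continuous_const).abs.continuousOn.integrableOn_compact
    (isCompact_closedBall 0 1)

theorem setIntegral_closedBall_abs_inner {u : V} (hu : ‖u‖ = 1) (z : V) :
    ∫ k in closedBall 0 1, |⟪k, z⟫| = ‖z‖ * ∫ k in closedBall 0 1, |⟪k, u⟫| := by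
  rcases eq_or_ne z 0 with rfl | hz
  · simp
  set A : V ≃ₗᵢ[ℝ] V := Submodule.reflection (ℝ ∙ (u - ‖z‖⁻¹ • z))ᗮ
  have hAu : A u = ‖z‖⁻¹ • z := Submodule.reflection_sub (by simp [hu, norm_smul, hz])
  have hAz : A (‖z‖ • u) = z := by
    rw [map_smul, hAu, smul_smul, mul_inv_cancel₀ (norm_ne_zero_iff.2 hz), one_smul]
  have hball : A ⁻¹' closedBall 0 1 = closedBall 0 1 := by simp
  calc ∫ k in closedBall 0 1, |⟪k, z⟫|
      = ∫ k in A ⁻¹' closedBall 0 1, |⟪A k, z⟫| :=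
        (A.measurePreserving.setIntegral_preimage_emb
          A.toHomeomorph.measurableEmbedding _ _).symm
    _ = ∫ k in closedBall 0 1, ‖z‖ * |⟪k, u⟫| := by
        rw [hball]
        congr 1 with k
        calc |⟪A k, z⟫| = |⟪A k, A (‖z‖ • u)⟫| := by rw [hAz]
          _ = ‖z‖ * |⟪k, u⟫| := by
            rw [A.inner_map_map, real_inner_smul_right, abs_mul, abs_norm]
    _ = ‖z‖ * ∫ k in closedBall 0 1, |⟪k, u⟫| := integral_const_mul _ _

theorem setIntegral_closedBall_abs_inner_pos {u : V} (hu : ‖u‖ = 1) :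
    0 < ∫ k in closedBall 0 1, |⟪k, u⟫| := by
  rw [setIntegral_pos_iff_support_of_nonneg_ae (.of_forall fun _ => abs_nonneg _)
    (integrableOn_closedBall_abs_inner u)]
  have hopen : IsOpen ({k : V | ⟪k, u⟫ ≠ 0} ∩ ball 0 1) :=
    (isOpen_ne_fun (continuous_id.inner continuous_const) continuous_const).inter isOpen_ball
  have hmem : (2⁻¹ : ℝ) • u ∈ {k : V | ⟪k, u⟫ ≠ 0} ∩ ball 0 1 := by
    refine ⟨?_, ?_⟩
    · simp [real_inner_smul_left, hu]
    · norm_num [norm_smul, hu]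
  refine (hopen.measure_pos volume ⟨_, hmem⟩).trans_le (measure_mono ?_)
  exact Set.inter_subset_inter (fun k hk => abs_ne_zero.2 hk) ball_subset_closedBall

end Measure

theorem posSemidef_norm_add_norm_sub_norm_sub (y : ι → V) :
    (of fun i j => ‖y i‖ + ‖y j‖ - ‖y i - y j‖).PosSemidef := by
  borelize V
  rcases subsingleton_or_nontrivial V with hV | hV
  · simp only [Subsingleton.elim _ (0 : V), norm_zero, sub_zero, add_zero]
    exact PosSemidef.zero
  obtain ⟨u, hu⟩ := exists_norm_eq V zero_le_one
  set C := ∫ k in closedBall 0 1, |⟪k, u⟫|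
  have hC : 0 < C := setIntegral_closedBall_abs_inner_pos hu
  have hI (z : V) : Integrable (fun k => |⟪k, z⟫|) (volume.restrict (closedBall 0 1)) :=
    integrableOn_closedBall_abs_inner z
  have hint (i j : ι) : Integrable (fun k => |⟪k, y i⟫| + |⟪k, y j⟫| - |⟪k, y i⟫ - ⟪k, y j⟫|)
      (volume.restrict (closedBall 0 1)) := by
    refine ((hI (y i)).add (hI (y j))).sub ?_
    simpa only [← inner_sub_right] using hI (y i - y j)
  have hpsd := posSemidef_of_integral hint
    (.of_forall fun k => posSemidef_abs_add_abs_sub_abs_sub fun i => ⟪k, y i⟫)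
  have hCN : (of fun i j => ∫ k in closedBall 0 1,
      |⟪k, y i⟫| + |⟪k, y j⟫| - |⟪k, y i⟫ - ⟪k, y j⟫|) =
      C • of fun i j => ‖y i‖ + ‖y j‖ - ‖y i - y j‖ := by
    ext i j
    simp only [of_apply, Matrix.smul_apply, smul_eq_mul, ← inner_sub_right]
    rw [integral_sub (f := fun k => |⟪k, y i⟫| + |⟪k, y j⟫|) ((hI _).add (hI _)) (hI _),
      integral_add (hI _) (hI _), setIntegral_closedBall_abs_inner hu (y i),
      setIntegral_closedBall_abs_inner hu (y j), setIntegral_closedBall_abs_inner hu (y i - y j)]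
    ring
  rw [hCN] at hpsd
  simpa [smul_smul, inv_mul_cancel₀ hC.ne'] using hpsd.smul (inv_nonneg.2 hC.le)

theorem posSemidef_exp_neg_mul_dist (y : ι → V) {t : ℝ} (ht : 0 ≤ t) :
    (of fun i j => rexp (-(t * dist (y i) (y j)))).PosSemidef := by
  set v : ι → ℝ := fun i => rexp (-(t * ‖y i‖))
  have h : (of fun i j => rexp (-(t * dist (y i) (y j)))) = vecMulVec v (star v) ⊙
      (t • of fun i j => ‖y i‖ + ‖y j‖ - ‖y i - y j‖).map rexp := by
    ext i j
    simp only [of_apply, hadamard_apply, vecMulVec_apply, map_apply, Matrix.smul_apply, smul_eq_mul,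
      star_trivial, v, ← Real.exp_add, dist_eq_norm]
    ring_nf
  rw [h]
  exact (posSemidef_vecMulVec_self_star v).hadamard
    ((posSemidef_norm_add_norm_sub_norm_sub y).smul ht).map_exp

theorem posSemidef_intervalIntegral_exp_neg_mul_dist (y : ι → V) :
    (of fun i j => ∫ t in (0 : ℝ)..1, rexp (-(t * dist (y i) (y j)))).PosSemidef := by
  simp only [intervalIntegral.integral_of_le zero_le_one]
  refine posSemidef_of_integral (fun i j => ?_) ?_
  · exact (by fun_prop : Continuous fun t => rexp (-(t * dist (y i) (y j)))).integrableOn_Ioc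
  · exact (ae_restrict_iff' measurableSet_Ioc).2
      (.of_forall fun t ht => posSemidef_exp_neg_mul_dist y ht.1.le)

end InnerProductSpace

theorem coulomb_minus_yukawa_lower_bound_general
    (N : ℕ) (y : Fin N → E3) (hy : Function.Injective y)
    (q : Fin N → ℝ) :
    -∑ i, q i ^ 2
      ≤ ∑ i, ∑ j, (if i = j then 0 else
          q i * q j * (1 - Real.exp (-dist (y i) (y j))) / dist (y i) (y j)) := by
  have hK := (posSemidef_intervalIntegral_exp_neg_mul_dist y).dotProduct_mulVec_nonneg q
  have hentry (i j : Fin N) :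
      q i * ((∫ t in (0 : ℝ)..1, rexp (-(t * dist (y i) (y j)))) * q j)
        = (if i = j then 0 else
            q i * q j * (1 - Real.exp (-dist (y i) (y j))) / dist (y i) (y j))
          + if i = j then q i ^ 2 else 0 := by
    by_cases h : i = j
    · subst h
      simp [sq]
    · rw [intervalIntegral_exp_neg_mul (dist_ne_zero.2 (hy.ne h)), if_neg h, if_neg h]
      ring
  simp only [dotProduct, mulVec, of_apply, Pi.star_apply, star_trivial, Finset.mul_sum, hentry,
    Finset.sum_add_distrib, Finset.sum_ite_eq, Finset.mem_univ, if_true] at hK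
  linarith

/-- For pairwise distinct points `y₁, …, y_N ∈ ℝ³` and real charges
`q₁, …, q_N`, one has
`Σ_{i ≠ j} q_i q_j (1 − e^{−|y_i − y_j|})/|y_i − y_j| ≥ −Σ_i q_i²`:
replacing the Coulomb potential by the Yukawa potential lowers the total interaction
energy by at most `Σ_i q_i²`. -/
theorem coulomb_minus_yukawa_lower_bound
    (N : ℕ) (hN : 1 ≤ N) (y : Fin N → E3) (hy : Function.Injective y)
    (q : Fin N → ℝ) :
    -∑ i, q i ^ 2
      ≤ ∑ i, ∑ j, (if i = j then 0 else
          q i * q j * (1 - Real.exp (-dist (y i) (y j))) / dist (y i) (y j)) :=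
  coulomb_minus_yukawa_lower_bound_general N y hy q
end
end

section
/- There exists a universal constant C > 0 with the following property. For all points R, R', X, X' ∈ ℝ³ with R ≠ R', |R − X| ≤ (1/4)·min(|R − R'|, 1) and |R' − X'| ≤ (1/4)·min(|R − R'|, 1), one has | 1/|R − R'| + 1/|X − X'| − 1/|X − R'| − 1/|X' − R| | ≤ C / ( |R − R'| · (1 + |R − R'|²) ). In other words, the interaction of two neutral dipoles, each consisting of a positive point charge and a nearby negative point charge, decays like the inverse cube of the distance between the dipoles at large separation, and is at most C/|R − R'| at small separation. -/
/-! With `d = |R - R'|`, `b = |X - R'|`, `a' = |X' - R|`, `b' = |X - X'|`, write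
`1/d - 1/b = (b² - d²) / (d b (d + b))` and likewise `1/a' - 1/b'`: the interaction is a
difference of two such quotients. Their denominators are of order `d³` and differ by
`O(d² |R' - X'|)`, the first numerator is `O(d |R - X|)`, and the two numerators differ by
exactly `2⟪X - R, X' - R'⟫`. Hence the interaction is `O(|R - X| |R' - X'| / d³)`, and the
factor `min(d, 1)²` supplied by the hypotheses turns this into `C / (d (1 + d²))`. -/

noncomputable section

section Real

variable {a b a' b' : ℝ}

lemma one_div_sub_one_div_eq_sq_sub_sq_div (ha : 0 < a) (hb : 0 < b) :
    1 / a - 1 / b = (b ^ 2 - a ^ 2) / (a * b * (a + b)) := by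
  field_simp
  ring

lemma two_mul_pow_three_le_mul_mul_add {m : ℝ} (hm : 0 ≤ m) (ha : m ≤ a) (hb : m ≤ b) :
    2 * m ^ 3 ≤ a * b * (a + b) :=
  calc 2 * m ^ 3 = m * m * (m + m) := by ring
    _ ≤ a * b * (a + b) := by
      have := mul_nonneg (hm.trans ha) (hm.trans hb)
      gcongr
      linarith

lemma abs_mul_mul_add_sub_mul_mul_add_le {M : ℝ} (ha : |a| ≤ M) (hb : |b| ≤ M)
    (ha' : |a'| ≤ M) (hb' : |b'| ≤ M) :
    |a * b * (a + b) - a' * b' * (a' + b')| ≤ 3 * M ^ 2 * (|a - a'| + |b - b'|) := by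
  have hM : 0 ≤ M := (abs_nonneg a).trans ha
  have hsum_a : |a + a'| ≤ 2 * M := (abs_add_le a a').trans (by linarith)
  have hsum_b : |b + b'| ≤ 2 * M := (abs_add_le b b').trans (by linarith)
  calc |a * b * (a + b) - a' * b' * (a' + b')|
      = |(a - a') * ((a + a') * b + b ^ 2) + (b - b') * (a' ^ 2 + a' * (b + b'))| := by
        congr 1; ring
    _ ≤ |a - a'| * (|a + a'| * |b| + |b| ^ 2) + |b - b'| * (|a'| ^ 2 + |a'| * |b + b'|) := by
        refine (abs_add_le _ _).trans (add_le_add ?_ ?_) <;> rw [abs_mul] <;> gcongr <;>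
          refine (abs_add_le _ _).trans_eq ?_ <;> simp only [abs_mul, abs_pow]
    _ ≤ |a - a'| * (2 * M * M + M ^ 2) + |b - b'| * (M ^ 2 + M * (2 * M)) := by gcongr
    _ = 3 * M ^ 2 * (|a - a'| + |b - b'|) := by ring

lemma abs_div_sub_div_le {n n' D D' : ℝ} (hD : 0 < D) (hD' : 0 < D') :
    |n / D - n' / D'| ≤ |n| * |D - D'| / (D * D') + |n - n'| / D' := by
  have h : n / D - n' / D' = n * (D' - D) / (D * D') + (n - n') / D' := by
    field_simp
    ring
  rw [h, abs_sub_comm D]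
  refine (abs_add_le _ _).trans_eq ?_
  rw [abs_div, abs_div, abs_mul, abs_of_pos hD', abs_of_pos (mul_pos hD hD')]

lemma abs_one_div_sub_one_div_sub_sub_le {d e e' : ℝ} (hd : 0 < d) (he : e ≤ d / 4)
    (he' : e' ≤ d / 4) (hb : |d - b| ≤ e) (ha' : |d - a'| ≤ e') (hbb' : |b - b'| ≤ e')
    (hN : |(b ^ 2 - d ^ 2) - (b' ^ 2 - a' ^ 2)| ≤ 2 * e * e') :
    |(1 / d - 1 / b) - (1 / a' - 1 / b')| ≤ 152 * e * e' / d ^ 3 := by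
  obtain ⟨hb₁, hb₂⟩ := abs_le.mp hb
  obtain ⟨ha'₁, ha'₂⟩ := abs_le.mp ha'
  obtain ⟨hbb'₁, hbb'₂⟩ := abs_le.mp hbb'
  have hD : 27 / 32 * d ^ 3 ≤ d * b * (d + b) :=
    calc 27 / 32 * d ^ 3 = 2 * (3 * d / 4) ^ 3 := by ring
      _ ≤ _ := two_mul_pow_three_le_mul_mul_add (by positivity) (by linarith) (by linarith)
  have hD' : d ^ 3 / 4 ≤ a' * b' * (a' + b') :=
    calc d ^ 3 / 4 = 2 * (d / 2) ^ 3 := by ring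
      _ ≤ _ := two_mul_pow_three_le_mul_mul_add (by positivity) (by linarith) (by linarith)
  have hD₀ : 0 < d * b * (d + b) := hD.trans_lt' (by positivity)
  have hD'₀ : 0 < a' * b' * (a' + b') := hD'.trans_lt' (by positivity)
  have hN₁ : |b ^ 2 - d ^ 2| ≤ 9 / 4 * d * e := by
    rw [show b ^ 2 - d ^ 2 = (d - b) * -(d + b) by ring, abs_mul, abs_neg,
      abs_of_pos (by linarith : 0 < d + b)]
    nlinarith
  have hbound : ∀ t, d / 2 ≤ t → t ≤ 3 * d / 2 → |t| ≤ 3 * d / 2 := fun t h₁ h₂ =>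
    abs_le.mpr ⟨by linarith, h₂⟩
  have hDD' : |d * b * (d + b) - a' * b' * (a' + b')| ≤ 27 / 4 * d ^ 2 * (2 * e') :=
    calc _ ≤ 3 * (3 * d / 2) ^ 2 * (|d - a'| + |b - b'|) :=
          abs_mul_mul_add_sub_mul_mul_add_le (hbound d (by linarith) (by linarith))
            (hbound b (by linarith) (by linarith)) (hbound a' (by linarith) (by linarith))
            (hbound b' (by linarith) (by linarith))
      _ ≤ 27 / 4 * d ^ 2 * (2 * e') := by nlinarith
  have he₀ : 0 ≤ e := (abs_nonneg _).trans hb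
  have he'₀ : 0 ≤ e' := (abs_nonneg _).trans ha'
  rw [one_div_sub_one_div_eq_sq_sub_sq_div hd (by linarith),
    one_div_sub_one_div_eq_sq_sub_sq_div (by linarith) (by linarith)]
  calc _ ≤ |b ^ 2 - d ^ 2| * |d * b * (d + b) - a' * b' * (a' + b')|
          / (d * b * (d + b) * (a' * b' * (a' + b'))) + |(b ^ 2 - d ^ 2) - (b' ^ 2 - a' ^ 2)|
          / (a' * b' * (a' + b')) :=
        abs_div_sub_div_le hD₀ hD'₀
    _ ≤ 9 / 4 * d * e * (27 / 4 * d ^ 2 * (2 * e')) / (27 / 32 * d ^ 3 * (d ^ 3 / 4))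
          + 2 * e * e' / (d ^ 3 / 4) := by gcongr
    _ = 152 * e * e' / d ^ 3 := by field_simp; ring

end Real

lemma sq_min_one_div_pow_three_le {d : ℝ} (hd : 0 < d) :
    min d 1 ^ 2 / d ^ 3 ≤ 2 / (d * (1 + d ^ 2)) := by
  rw [div_le_div_iff₀ (by positivity) (by positivity)]
  rcases le_total d 1 with h | h
  · rw [min_eq_left h]
    have : d ^ 2 ≤ 1 := by nlinarith
    nlinarith [mul_le_mul_of_nonneg_left this (pow_pos hd 3).le]
  · rw [min_eq_right h]
    nlinarith

section InnerProductSpace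

open RealInnerProductSpace

variable {V : Type*} [NormedAddCommGroup V] [InnerProductSpace ℝ V]

lemma dist_sq_add_dist_sq_sub_dist_sq_sub_dist_sq (a b c d : V) :
    dist a c ^ 2 + dist b d ^ 2 - dist a d ^ 2 - dist b c ^ 2 = 2 * ⟪a - b, d - c⟫ := by
  simp only [dist_eq_norm, norm_sub_sq_real, inner_sub_left, inner_sub_right]
  ring

theorem abs_dipole_interaction_le {R R' X X' : V} (hRR' : R ≠ R')
    (hX : dist R X ≤ dist R R' / 4) (hX' : dist R' X' ≤ dist R R' / 4) :
    |1 / dist R R' + 1 / dist X X' - 1 / dist X R' - 1 / dist X' R|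
      ≤ 152 * dist R X * dist R' X' / dist R R' ^ 3 := by
  have hN : |(dist X R' ^ 2 - dist R R' ^ 2) - (dist X X' ^ 2 - dist X' R ^ 2)|
      ≤ 2 * dist R X * dist R' X' := by
    rw [show (dist X R' ^ 2 - dist R R' ^ 2) - (dist X X' ^ 2 - dist X' R ^ 2)
        = dist X R' ^ 2 + dist R X' ^ 2 - dist X X' ^ 2 - dist R R' ^ 2 by
          rw [dist_comm X' R]; ring,
      dist_sq_add_dist_sq_sub_dist_sq_sub_dist_sq, abs_mul, abs_two, mul_assoc,
      dist_eq_norm' R X, dist_eq_norm' R' X']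
    gcongr
    exact abs_real_inner_le_norm _ _
  have := abs_one_div_sub_one_div_sub_sub_le (dist_pos.2 hRR') hX hX' (abs_dist_sub_le R X R')
    (by rw [dist_comm R R']; exact abs_dist_sub_le R' X' R)
    (by rw [dist_comm X R', dist_comm X X']; exact abs_dist_sub_le R' X' X) hN
  convert this using 2
  ring

end InnerProductSpace

/-- There is a universal constant `C > 0` such that for all
`R, R', X, X' ∈ ℝ³` with `R ≠ R'`, `|R − X| ≤ (1/4)·min(|R − R'|, 1)` and
`|R' − X'| ≤ (1/4)·min(|R − R'|, 1)`, the dipole-dipole interaction satisfies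
`|1/|R − R'| + 1/|X − X'| − 1/|X − R'| − 1/|X' − R|| ≤ C/(|R − R'|·(1 + |R − R'|²))`. -/
theorem dipole_dipole_interaction_bound :
    ∃ C : ℝ, 0 < C ∧ ∀ R R' X X' : E3, R ≠ R' →
      dist R X ≤ min (dist R R') 1 / 4 →
      dist R' X' ≤ min (dist R R') 1 / 4 →
      |1 / dist R R' + 1 / dist X X' - 1 / dist X R' - 1 / dist X' R|
        ≤ C / (dist R R' * (1 + dist R R' ^ 2)) := by
  refine ⟨19, by norm_num, fun R R' X X' hRR' hX hX' => ?_⟩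
  set d := dist R R'
  have hd : 0 < d := dist_pos.2 hRR'
  have hmin : min d 1 / 4 ≤ d / 4 := by gcongr; exact min_le_left _ _
  calc _ ≤ 152 * dist R X * dist R' X' / d ^ 3 :=
        abs_dipole_interaction_le hRR' (hX.trans hmin) (hX'.trans hmin)
    _ ≤ 152 * (min d 1 / 4) * (min d 1 / 4) / d ^ 3 := by gcongr
    _ = 19 / 2 * (min d 1 ^ 2 / d ^ 3) := by ring
    _ ≤ 19 / 2 * (2 / (d * (1 + d ^ 2))) :=
        mul_le_mul_of_nonneg_left (sq_min_one_div_pow_three_le hd) (by norm_num)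
    _ = 19 / (d * (1 + d ^ 2)) := by ring
end
end

section
/- There exists a universal constant C > 0 such that for every finite set J ⊆ ℤ³ with #J ≥ 2 and every family of nonnegative real numbers (a_j)_{j ∈ J}, one has Σ_{j, k ∈ J, j ≠ k} a_j a_k / (1 + |j − k|³) ≤ C · log(1 + #J) · Σ_{j ∈ J} a_j². -/
noncomputable section

/-!
Bounding `a_j a_k ≤ (a_j² + a_k²)/2` reduces the estimate to a uniform bound on the row sums
`Σ_{k ∈ J, k ≠ j} 1/(1 + |j − k|³)`. A ball of radius `D` in `ℤ³` holds at most
`(2D + 1)³ ≤ 27 (1 + D³)` lattice points, so the term of `k` is at most `27 / N_k`, where `N_k`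
counts the points of `J` at least as close to `j` as `k`; and `Σ_k 1 / N_k` is at most the
harmonic number `H_{#J} ≤ 1 + log #J`.
-/

open Finset

theorem sum_inv_card_filter_le_le_harmonic {α : Type*} (S : Finset α) (d : α → ℝ) :
    ∑ k ∈ S, (#{k' ∈ S | d k' ≤ d k} : ℝ)⁻¹ ≤ harmonic #S := by
  classical
  induction S using Finset.induction_on_max_value d with
  | empty => simp
  | insert a s ha hmax ih =>
    have hfull : #{k' ∈ insert a s | d k' ≤ d a} = #s + 1 := by
      rw [filter_true_of_mem, card_insert_of_notMem ha]
      intro x hx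
      rcases mem_insert.1 hx with rfl | hx
      exacts [le_rfl, hmax x hx]
    have hrest : ∀ x ∈ s, (#{k' ∈ insert a s | d k' ≤ d x} : ℝ)⁻¹ ≤
        (#{k' ∈ s | d k' ≤ d x} : ℝ)⁻¹ := fun x hx => by
      apply inv_anti₀ (by exact_mod_cast card_pos.2 ⟨x, mem_filter.2 ⟨hx, le_refl (d x)⟩⟩)
      exact_mod_cast card_le_card (filter_subset_filter _ (subset_insert a s))
    rw [sum_insert ha, card_insert_of_notMem ha, harmonic_succ, hfull]
    push_cast
    linarith [sum_le_sum hrest]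

theorem sum_sum_mul_mul_le_of_row_sum_le {α : Type*} {J : Finset α} {K : α → α → ℝ} {B : ℝ}
    (hK : ∀ j k, 0 ≤ K j k) (hsymm : ∀ j k, K j k = K k j)
    (hrow : ∀ j ∈ J, ∑ k ∈ J, K j k ≤ B) (a : α → ℝ) :
    ∑ j ∈ J, ∑ k ∈ J, a j * a k * K j k ≤ B * ∑ j ∈ J, a j ^ 2 := by
  have hamgm : ∀ j k, a j * a k * K j k ≤ (a j ^ 2 * K j k + a k ^ 2 * K k j) / 2 := by
    intro j k
    rw [hsymm k j]
    nlinarith [mul_nonneg (sq_nonneg (a j - a k)) (hK j k)]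
  calc ∑ j ∈ J, ∑ k ∈ J, a j * a k * K j k
      ≤ ∑ j ∈ J, ∑ k ∈ J, (a j ^ 2 * K j k + a k ^ 2 * K k j) / 2 := by
        gcongr with j _ k _
        exact hamgm j k
    _ = ∑ j ∈ J, a j ^ 2 * ∑ k ∈ J, K j k := by
        simp only [← sum_div, sum_add_distrib]
        rw [sum_comm (f := fun j k => a k ^ 2 * K k j)]
        simp only [mul_sum]
        ring
    _ ≤ ∑ j ∈ J, a j ^ 2 * B := by
        gcongr with j hj
        exact hrow j hj
    _ = B * ∑ j ∈ J, a j ^ 2 := by rw [mul_sum]; simp only [mul_comm]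

theorem card_le_of_forall_natAbs_sub_le {ι : Type*} [Fintype ι] [DecidableEq ι]
    {S : Finset (ι → ℤ)} (j : ι → ℤ) {m : ℕ} (h : ∀ k ∈ S, ∀ i, (k i - j i).natAbs ≤ m) :
    #S ≤ (2 * m + 1) ^ Fintype.card ι := by
  have hsub : S ⊆ Icc (fun i => j i - m) (fun i => j i + m) := fun k hk => by
    simp only [mem_Icc, Pi.le_def]
    refine ⟨fun i => ?_, fun i => ?_⟩ <;> have := h k hk i <;> omega
  calc #S ≤ #(Icc (fun i => j i - m) (fun i => j i + m)) := card_le_card hsub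
    _ = (2 * m + 1) ^ Fintype.card ι := by
        rw [Pi.card_Icc]
        have hi : ∀ i, #(Icc (j i - m) (j i + m)) = 2 * m + 1 := fun i => by
          rw [Int.card_Icc]
          omega
        simp only [hi, prod_const, card_univ]

theorem card_filter_norm_latt_sub_le (j : Fin 3 → ℤ) (S : Finset (Fin 3 → ℤ)) {D : ℝ}
    (hD : 0 ≤ D) : (#{k ∈ S | ‖latt j - latt k‖ ≤ D} : ℝ) ≤ (2 * D + 1) ^ 3 := by
  have hcoord : ∀ k i, |(k i - j i : ℝ)| ≤ ‖latt j - latt k‖ := fun k i => by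
    simpa [latt, abs_sub_comm] using PiLp.norm_apply_le (latt j - latt k) i
  have hcard := card_le_of_forall_natAbs_sub_le (S := {k ∈ S | ‖latt j - latt k‖ ≤ D}) j
    (m := ⌊D⌋₊) fun k hk i => Nat.le_floor <| by
      rw [Nat.cast_natAbs]
      push_cast
      exact (hcoord k i).trans (mem_filter.1 hk).2
  calc (#{k ∈ S | ‖latt j - latt k‖ ≤ D} : ℝ) ≤ ((2 * ⌊D⌋₊ + 1) ^ 3 : ℕ) := by
        exact_mod_cast hcard
    _ ≤ (2 * D + 1) ^ 3 := by
        push_cast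
        gcongr
        exact Nat.floor_le hD

theorem sum_inv_one_add_norm_latt_sub_pow_le (j : Fin 3 → ℤ) (S : Finset (Fin 3 → ℤ)) :
    ∑ k ∈ S, (1 + ‖latt j - latt k‖ ^ 3)⁻¹ ≤ 27 * (1 + Real.log #S) := by
  calc ∑ k ∈ S, (1 + ‖latt j - latt k‖ ^ 3)⁻¹
      ≤ ∑ k ∈ S, 27 * (#{k' ∈ S | ‖latt j - latt k'‖ ≤ ‖latt j - latt k‖} : ℝ)⁻¹ := by
        gcongr with k hk
        set D := ‖latt j - latt k‖
        have hpos : (0 : ℝ) < #{k' ∈ S | ‖latt j - latt k'‖ ≤ D} := by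
          exact_mod_cast card_pos.2 ⟨k, mem_filter.2 ⟨hk, le_refl D⟩⟩
        have hD : 0 ≤ D := norm_nonneg _
        have hcount := card_filter_norm_latt_sub_le j S hD
        calc (1 + D ^ 3)⁻¹ = 27 * (27 * (1 + D ^ 3))⁻¹ := by field_simp
          _ ≤ _ := by
            gcongr
            nlinarith [mul_nonneg hD (sq_nonneg (D - 1)), sq_nonneg (D - 1)]
    _ ≤ 27 * harmonic #S := by
        rw [← mul_sum]
        gcongr
        exact sum_inv_card_filter_le_le_harmonic S _
    _ ≤ 27 * (1 + Real.log #S) := by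
        gcongr
        exact harmonic_le_one_add_log _

theorem sum_erase_inv_one_add_norm_latt_sub_pow_le {J : Finset (Fin 3 → ℤ)} (hJ : 2 ≤ #J)
    (j : Fin 3 → ℤ) :
    ∑ k ∈ J.erase j, (1 + ‖latt j - latt k‖ ^ 3)⁻¹ ≤ 54 * Real.log (1 + #J) := by
  have hJ' : (2 : ℝ) ≤ #J := by exact_mod_cast hJ
  have hlog : 1 ≤ Real.log (1 + #J) := by
    rw [Real.le_log_iff_exp_le (by linarith)]
    linarith [Real.exp_one_lt_d9]
  have hpos : (0 : ℝ) < #(J.erase j) := by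
    have := pred_card_le_card_erase (s := J) (a := j)
    exact_mod_cast (show 0 < #(J.erase j) by omega)
  have hle : (#(J.erase j) : ℝ) ≤ 1 + #J := by
    have : (#(J.erase j) : ℝ) ≤ #J := by exact_mod_cast card_erase_le
    linarith
  calc ∑ k ∈ J.erase j, (1 + ‖latt j - latt k‖ ^ 3)⁻¹
      ≤ 27 * (1 + Real.log #(J.erase j)) := sum_inv_one_add_norm_latt_sub_pow_le j _
    _ ≤ 27 * (1 + Real.log (1 + #J)) := by gcongr
    _ ≤ 54 * Real.log (1 + #J) := by linarith

/-- There is a universal constant `C > 0` such that for every finite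
`J ⊆ ℤ³` with `#J ≥ 2` and all nonnegative `(a_j)_{j ∈ J}`,
`Σ_{j ≠ k ∈ J} a_j a_k/(1 + |j − k|³) ≤ C·log(1 + #J)·Σ_{j ∈ J} a_j²`. -/
theorem lattice_interaction_log_bound :
    ∃ C : ℝ, 0 < C ∧ ∀ J : Finset (Fin 3 → ℤ), 2 ≤ J.card →
      ∀ a : (Fin 3 → ℤ) → ℝ, (∀ j, 0 ≤ a j) →
      ∑ j ∈ J, ∑ k ∈ J, (if j = k then 0 else a j * a k / (1 + ‖latt j - latt k‖ ^ 3))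
        ≤ C * Real.log (1 + (J.card : ℝ)) * ∑ j ∈ J, a j ^ 2 := by
  refine ⟨54, by norm_num, fun J hJ a _ => ?_⟩
  let K : (Fin 3 → ℤ) → (Fin 3 → ℤ) → ℝ := fun j k =>
    if j = k then 0 else (1 + ‖latt j - latt k‖ ^ 3)⁻¹
  have hK : ∀ j k, 0 ≤ K j k := fun j k => by positivity
  have hsymm : ∀ j k, K j k = K k j := fun j k => by simp only [K, eq_comm, norm_sub_rev]
  have hrow : ∀ j ∈ J, ∑ k ∈ J, K j k ≤ 54 * Real.log (1 + #J) := fun j hj => by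
    rw [← sum_erase_add _ _ hj, show K j j = 0 from if_pos rfl, add_zero,
      sum_congr rfl fun k hk => show K j k = _ from if_neg (ne_of_mem_erase hk).symm]
    exact sum_erase_inv_one_add_norm_latt_sub_pow_le hJ j
  calc ∑ j ∈ J, ∑ k ∈ J, (if j = k then 0 else a j * a k / (1 + ‖latt j - latt k‖ ^ 3))
      = ∑ j ∈ J, ∑ k ∈ J, a j * a k * K j k := by
        refine sum_congr rfl fun j _ => sum_congr rfl fun k _ => ?_
        split_ifs <;> simp [K, *, div_eq_mul_inv]
    _ ≤ 54 * Real.log (1 + #J) * ∑ j ∈ J, a j ^ 2 :=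
        sum_sum_mul_mul_le_of_row_sum_le hK hsymm hrow a
end
end
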